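/- Theorem 1(1)-(2): the policy-rewriting transformation Tr preserves semantics and makes order irrelevant: for every packet, the decision assigned by Tr(R) under first-match semantics equals that assigned by R; moreover, since the rules of Tr(R) have pairwise disjoint match sets, any permutation of Tr(R) assigns the same decision to every packet. -/

import Mathlib

/-- A filtering rule: a match set over a packet space together with a
decision (`true` = accept, `false` = deny). -/
structure FwRule (P : Type*) where
  mtch : Set P
  dec : Bool

open Classical in
/-- First-match semantics: a packet gets the decision of the first rule
whose match set contains it, and no decision if no rule matches. -/
noncomputable def firstMatch {P : Type*} : List (FwRule P) → P → Option Bool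
  | [], _ => none
  | r :: rs, pkt => if pkt ∈ r.mtch then some r.dec else firstMatch rs pkt

/-- Phase 1 of Algorithm 4: every later rule with a decision differing from an
earlier rule gets the earlier rule's match set excluded from it
(`match(exclusion B A) = match B \ match A`). -/
noncomputable def phase1 {P : Type*} : List (FwRule P) → List (FwRule P)
  | [] => []
  | r :: rs =>
      r :: phase1 (rs.map fun s => if s.dec ≠ r.dec then ⟨s.mtch \ r.mtch, s.dec⟩ else s)
termination_by l => l.length
decreasing_by simp

open Classical in
/-- Phase 2 of Algorithm 4: a rule whose match set is covered by the union of
the later rules with the same decision is removed (testRedundancy); otherwise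
its match set is excluded from every later rule with the same decision. -/
noncomputable def phase2 {P : Type*} : List (FwRule P) → List (FwRule P)
  | [] => []
  | r :: rs =>
      if r.mtch ⊆ {pkt | ∃ s ∈ rs, s.dec = r.dec ∧ pkt ∈ s.mtch} then phase2 rs
      else r :: phase2 (rs.map fun s => if s.dec = r.dec then ⟨s.mtch \ r.mtch, s.dec⟩ else s)
termination_by l => l.length
decreasing_by all_goals simp

/-- The policy-rewriting transformation `Tr` of Algorithm 4. -/
noncomputable def Tr {P : Type*} (R : List (FwRule P)) : List (FwRule P) :=
  phase2 (phase1 R)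

/-!
After phase 1 the policy is conflict-free: rules with different decisions have disjoint
match sets, because every rule has the earlier conflicting rules cut out of it and the
later rewriting only shrinks match sets. In a conflict-free policy every rule matching a
packet carries the same decision, so the first-match decision is that of *any* matching
rule. Hence the order of the rules is irrelevant, and a rule covered by later rules with
its decision can be dropped. Phase 2 keeps the policy conflict-free and cuts every kept
rule out of the later rules with the same decision, so all match sets become disjoint.
-/

namespace FwRule

variable {P : Type*}

def Refines (t s : FwRule P) : Prop :=
  t.dec = s.dec ∧ t.mtch ⊆ s.mtch

theorem Refines.refl (s : FwRule P) : s.Refines s :=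
  ⟨rfl, subset_rfl⟩

theorem Refines.trans {t s u : FwRule P} (hts : t.Refines s) (hsu : s.Refines u) :
    t.Refines u :=
  ⟨hts.1.trans hsu.1, hts.2.trans hsu.2⟩

/-- The paper's `exclusion(s, A)`, performed only when `p s.dec`. -/
def excludeWhen (p : Bool → Prop) [DecidablePred p] (A : Set P) (s : FwRule P) : FwRule P :=
  if p s.dec then ⟨s.mtch \ A, s.dec⟩ else s

theorem disjoint_mtch_excludeWhen {p : Bool → Prop} [DecidablePred p] (A : Set P)
    {s : FwRule P} (h : p s.dec) : Disjoint A (s.excludeWhen p A).mtch := by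
  simpa [excludeWhen, h] using Set.disjoint_sdiff_right

variable (p : Bool → Prop) [DecidablePred p] (A : Set P) (s : FwRule P)

@[simp]
theorem dec_excludeWhen : (s.excludeWhen p A).dec = s.dec := by
  unfold excludeWhen; split_ifs <;> rfl

theorem excludeWhen_refines : (s.excludeWhen p A).Refines s := by
  unfold excludeWhen; split_ifs
  exacts [⟨rfl, Set.sdiff_subset⟩, Refines.refl s]

theorem mem_mtch_excludeWhen_iff {x : P} (hx : x ∉ A) :
    x ∈ (s.excludeWhen p A).mtch ↔ x ∈ s.mtch := by
  unfold excludeWhen; split_ifs <;> simp [hx]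

end FwRule

section Policy

open FwRule

variable {P : Type*}

open Classical in
theorem firstMatch_cons (r : FwRule P) (rs : List (FwRule P)) (pkt : P) :
    firstMatch (r :: rs) pkt = if pkt ∈ r.mtch then some r.dec else firstMatch rs pkt :=
  rfl

open Classical in
theorem firstMatch_map {f : FwRule P → FwRule P} {pkt : P} (hdec : ∀ s, (f s).dec = s.dec)
    (hmem : ∀ s, pkt ∈ (f s).mtch ↔ pkt ∈ s.mtch) (l : List (FwRule P)) :
    firstMatch (l.map f) pkt = firstMatch l pkt := by
  induction l with
  | nil => rfl
  | cons r rs ih =>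
    rw [List.map_cons, firstMatch_cons, firstMatch_cons, hdec, ih]
    exact if_congr (hmem r) rfl rfl

theorem firstMatch_eq_none_iff {l : List (FwRule P)} {pkt : P} :
    firstMatch l pkt = none ↔ ∀ r ∈ l, pkt ∉ r.mtch := by
  induction l with
  | nil => simp [firstMatch]
  | cons r rs ih => by_cases h : pkt ∈ r.mtch <;> simp [firstMatch_cons, h, ih]

theorem exists_mem_of_firstMatch_eq_some {l : List (FwRule P)} {pkt : P} {d : Bool}
    (h : firstMatch l pkt = some d) : ∃ r ∈ l, pkt ∈ r.mtch ∧ r.dec = d := by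
  induction l with
  | nil => simp [firstMatch] at h
  | cons r rs ih =>
    by_cases hr : pkt ∈ r.mtch
    · simp only [firstMatch_cons, hr, if_true, Option.some_inj] at h
      exact ⟨r, List.mem_cons_self, hr, h⟩
    · rw [firstMatch_cons, if_neg hr] at h
      obtain ⟨s, hs, hmem, hdec⟩ := ih h
      exact ⟨s, List.mem_cons_of_mem r hs, hmem, hdec⟩

def ConflictFree (l : List (FwRule P)) : Prop :=
  l.Pairwise fun a b => a.dec ≠ b.dec → Disjoint a.mtch b.mtch

namespace ConflictFree

variable {l l' : List (FwRule P)}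

theorem of_pairwise_disjoint (h : l.Pairwise fun a b => Disjoint a.mtch b.mtch) :
    ConflictFree l :=
  h.imp fun {a b} (hab : Disjoint a.mtch b.mtch) (_ : a.dec ≠ b.dec) => hab

theorem perm (hl : ConflictFree l) (hp : l'.Perm l) : ConflictFree l' :=
  (hp.pairwise_iff fun hab hne => (hab (Ne.symm hne)).symm).2 hl

theorem map (hl : ConflictFree l) {f : FwRule P → FwRule P} (hf : ∀ s, (f s).Refines s) :
    ConflictFree (l.map f) := by
  refine List.Pairwise.map f (fun a b hab hne => ?_) hl
  rw [(hf a).1, (hf b).1] at hne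
  exact (hab hne).mono (hf a).2 (hf b).2

theorem dec_eq (hl : ConflictFree l) {a b : FwRule P} (ha : a ∈ l) (hb : b ∈ l) {x : P}
    (hxa : x ∈ a.mtch) (hxb : x ∈ b.mtch) : a.dec = b.dec := by
  have : Std.Symm fun a b : FwRule P => a.dec ≠ b.dec → Disjoint a.mtch b.mtch :=
    ⟨fun _ _ hab hne => (hab (Ne.symm hne)).symm⟩
  by_contra hne
  have hab : a ≠ b := fun h => hne (congrArg FwRule.dec h)
  exact Set.disjoint_left.1 (hl.forall ha hb hab hne) hxa hxb

theorem firstMatch_eq_some_iff (hl : ConflictFree l) {pkt : P} {d : Bool} :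
    firstMatch l pkt = some d ↔ ∃ r ∈ l, pkt ∈ r.mtch ∧ r.dec = d := by
  refine ⟨exists_mem_of_firstMatch_eq_some, fun ⟨r, hr, hmem, hdec⟩ => ?_⟩
  obtain ⟨d', hd'⟩ := Option.ne_none_iff_exists'.1
    fun hnone => firstMatch_eq_none_iff.1 hnone r hr hmem
  obtain ⟨t, ht, htmem, rfl⟩ := exists_mem_of_firstMatch_eq_some hd'
  rw [hd', hl.dec_eq ht hr htmem hmem, hdec]

theorem firstMatch_eq (hl : ConflictFree l) (hl' : ConflictFree l') {pkt : P}
    (h : ∀ d, (∃ r ∈ l, pkt ∈ r.mtch ∧ r.dec = d) ↔ ∃ r ∈ l', pkt ∈ r.mtch ∧ r.dec = d) :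
    firstMatch l pkt = firstMatch l' pkt :=
  Option.ext fun d => by rw [hl.firstMatch_eq_some_iff, hl'.firstMatch_eq_some_iff, h]

theorem firstMatch_perm (hl : ConflictFree l) (hp : l'.Perm l) (pkt : P) :
    firstMatch l' pkt = firstMatch l pkt :=
  (hl.perm hp).firstMatch_eq hl fun _ => by simp only [hp.mem_iff]

end ConflictFree

section Phase1

theorem phase1_cons (r : FwRule P) (rs : List (FwRule P)) :
    phase1 (r :: rs) = r :: phase1 (rs.map (excludeWhen (· ≠ r.dec) r.mtch)) :=
  phase1.eq_2 r rs

@[elab_as_elim]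
theorem phase1_induction {motive : List (FwRule P) → Prop} (nil : motive [])
    (cons : ∀ r rs, motive (rs.map (excludeWhen (· ≠ r.dec) r.mtch)) → motive (r :: rs))
    (l : List (FwRule P)) : motive l := by
  induction l using phase1.induct with
  | case1 => exact nil
  | case2 r rs ih =>
    simp only [dite_eq_ite, List.map_attach_eq_pmap, List.pmap_eq_map] at ih
    exact cons r rs ih

theorem exists_refines_of_mem_phase1 {l : List (FwRule P)} {t : FwRule P}
    (ht : t ∈ phase1 l) : ∃ s ∈ l, t.Refines s := by
  induction l using phase1_induction with
  | nil => simp [phase1] at ht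
  | cons r rs ih =>
    rw [phase1_cons, List.mem_cons] at ht
    rcases ht with rfl | ht
    · exact ⟨t, List.mem_cons_self, Refines.refl t⟩
    · obtain ⟨_, hs', hts'⟩ := ih ht
      obtain ⟨s, hs, rfl⟩ := List.mem_map.1 hs'
      exact ⟨s, List.mem_cons_of_mem r hs, hts'.trans (excludeWhen_refines _ _ s)⟩

theorem firstMatch_phase1 (l : List (FwRule P)) (pkt : P) :
    firstMatch (phase1 l) pkt = firstMatch l pkt := by
  induction l using phase1_induction with
  | nil => rw [phase1]
  | cons r rs ih =>
    rw [phase1_cons, firstMatch_cons, firstMatch_cons, ih]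
    by_cases hr : pkt ∈ r.mtch
    · simp only [hr, if_true]
    · simp only [hr, if_false]
      exact firstMatch_map (dec_excludeWhen _ _) (mem_mtch_excludeWhen_iff _ _ · hr) rs

theorem conflictFree_phase1 (l : List (FwRule P)) : ConflictFree (phase1 l) := by
  induction l using phase1_induction with
  | nil => rw [phase1]; exact List.Pairwise.nil
  | cons r rs ih =>
    rw [phase1_cons, ConflictFree, List.pairwise_cons]
    refine ⟨fun t ht hne => ?_, ih⟩
    obtain ⟨_, hs', hts'⟩ := exists_refines_of_mem_phase1 ht
    obtain ⟨s, -, rfl⟩ := List.mem_map.1 hs'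
    have hs : s.dec ≠ r.dec := by simpa [hts'.1] using Ne.symm hne
    exact (disjoint_mtch_excludeWhen (p := (· ≠ r.dec)) r.mtch hs).mono_right hts'.2

end Phase1

section Phase2

/-- `testRedundancy` of phase 2. -/
def CoveredBy (r : FwRule P) (rs : List (FwRule P)) : Prop :=
  r.mtch ⊆ {pkt | ∃ s ∈ rs, s.dec = r.dec ∧ pkt ∈ s.mtch}

theorem phase2_cons_of_coveredBy {r : FwRule P} {rs : List (FwRule P)} (h : CoveredBy r rs) :
    phase2 (r :: rs) = phase2 rs := by
  rw [CoveredBy] at h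
  rw [phase2, if_pos h]

theorem phase2_cons_of_not_coveredBy {r : FwRule P} {rs : List (FwRule P)}
    (h : ¬CoveredBy r rs) :
    phase2 (r :: rs) = r :: phase2 (rs.map (excludeWhen (· = r.dec) r.mtch)) := by
  rw [CoveredBy] at h
  rw [phase2, if_neg h]
  rfl

@[elab_as_elim]
theorem phase2_induction {motive : List (FwRule P) → Prop} (nil : motive [])
    (covered : ∀ r rs, CoveredBy r rs → motive rs → motive (r :: rs))
    (not_covered : ∀ r rs, ¬CoveredBy r rs →
      motive (rs.map (excludeWhen (· = r.dec) r.mtch)) → motive (r :: rs))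
    (l : List (FwRule P)) : motive l := by
  induction l using phase2.induct with
  | case1 => exact nil
  | case2 r rs h ih => exact covered r rs h ih
  | case3 r rs h ih =>
    simp only [dite_eq_ite, List.map_attach_eq_pmap, List.pmap_eq_map] at ih
    exact not_covered r rs h ih

theorem exists_refines_of_mem_phase2 {l : List (FwRule P)} {t : FwRule P}
    (ht : t ∈ phase2 l) : ∃ s ∈ l, t.Refines s := by
  induction l using phase2_induction with
  | nil => simp [phase2] at ht
  | covered r rs h ih =>
    rw [phase2_cons_of_coveredBy h] at ht
    obtain ⟨s, hs, hts⟩ := ih ht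
    exact ⟨s, List.mem_cons_of_mem r hs, hts⟩
  | not_covered r rs h ih =>
    rw [phase2_cons_of_not_coveredBy h, List.mem_cons] at ht
    rcases ht with rfl | ht
    · exact ⟨t, List.mem_cons_self, Refines.refl t⟩
    · obtain ⟨_, hs', hts'⟩ := ih ht
      obtain ⟨s, hs, rfl⟩ := List.mem_map.1 hs'
      exact ⟨s, List.mem_cons_of_mem r hs, hts'.trans (excludeWhen_refines _ _ s)⟩

theorem ConflictFree.firstMatch_cons_of_coveredBy {r : FwRule P} {rs : List (FwRule P)}
    (hl : ConflictFree (r :: rs)) (h : CoveredBy r rs) (pkt : P) :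
    firstMatch (r :: rs) pkt = firstMatch rs pkt := by
  refine hl.firstMatch_eq (List.pairwise_cons.1 hl).2 fun d => ⟨?_, ?_⟩
  · rintro ⟨t, ht, hmem, rfl⟩
    rcases List.mem_cons.1 ht with rfl | ht
    · obtain ⟨s, hs, hdec, hsmem⟩ := h hmem
      exact ⟨s, hs, hsmem, hdec⟩
    · exact ⟨t, ht, hmem, rfl⟩
  · rintro ⟨t, ht, hmem, hdec⟩
    exact ⟨t, List.mem_cons_of_mem r ht, hmem, hdec⟩

theorem firstMatch_phase2 {l : List (FwRule P)} (hl : ConflictFree l) (pkt : P) :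
    firstMatch (phase2 l) pkt = firstMatch l pkt := by
  induction l using phase2_induction with
  | nil => rw [phase2]
  | covered r rs h ih =>
    rw [phase2_cons_of_coveredBy h, ih (List.pairwise_cons.1 hl).2,
      hl.firstMatch_cons_of_coveredBy h]
  | not_covered r rs h ih =>
    have hrs :=
      ConflictFree.map (List.pairwise_cons.1 hl).2 (excludeWhen_refines (· = r.dec) r.mtch)
    rw [phase2_cons_of_not_coveredBy h, firstMatch_cons, firstMatch_cons, ih hrs]
    by_cases hr : pkt ∈ r.mtch
    · simp only [hr, if_true]
    · simp only [hr, if_false]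
      exact firstMatch_map (dec_excludeWhen _ _) (mem_mtch_excludeWhen_iff _ _ · hr) rs

theorem pairwise_disjoint_phase2 {l : List (FwRule P)} (hl : ConflictFree l) :
    (phase2 l).Pairwise fun a b => Disjoint a.mtch b.mtch := by
  induction l using phase2_induction with
  | nil => rw [phase2]; exact List.Pairwise.nil
  | covered r rs h ih =>
    rw [phase2_cons_of_coveredBy h]
    exact ih (List.pairwise_cons.1 hl).2
  | not_covered r rs h ih =>
    obtain ⟨hr, hrs⟩ := List.pairwise_cons.1 hl
    rw [phase2_cons_of_not_coveredBy h, List.pairwise_cons]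
    refine ⟨fun t ht => ?_, ih (ConflictFree.map hrs (excludeWhen_refines _ _))⟩
    obtain ⟨_, hs', hts'⟩ := exists_refines_of_mem_phase2 ht
    obtain ⟨s, hs, rfl⟩ := List.mem_map.1 hs'
    refine Disjoint.mono_right hts'.2 ?_
    by_cases hdec : s.dec = r.dec
    · exact disjoint_mtch_excludeWhen r.mtch hdec
    · exact (hr s hs (Ne.symm hdec)).mono_right (excludeWhen_refines _ _ s).2

end Phase2

end Policy

/-- Theorem 1(1)-(2): `Tr` preserves the first-match semantics
of the policy, and since the rules of `Tr R` have pairwise disjoint match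
sets, any permutation of `Tr R` assigns the same decision to every packet. -/
theorem Tr_equiv_and_order_irrelevant {P : Type*} (R : List (FwRule P)) :
    (∀ pkt : P, firstMatch (Tr R) pkt = firstMatch R pkt) ∧
    ((Tr R).Pairwise (fun a b => a.mtch ∩ b.mtch = ∅) ∧
      ∀ R' : List (FwRule P), R'.Perm (Tr R) →
        ∀ pkt : P, firstMatch R' pkt = firstMatch (Tr R) pkt) := by
  have hcf := conflictFree_phase1 R
  have hdisj := pairwise_disjoint_phase2 hcf
  refine ⟨fun pkt => ?_, hdisj.imp Set.disjoint_iff_inter_eq_empty.1, fun R' hp pkt => ?_⟩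
  · rw [Tr, firstMatch_phase2 hcf, firstMatch_phase1]
  · exact (ConflictFree.of_pairwise_disjoint hdisj).firstMatch_perm hp pkt
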